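/- Under the GCN model with minimum degree D_min ≥ 2 and unit-norm inputs, the total edge sensitivity satisfies √(∑_{v∈V}‖h̃_v - h̃'_v‖²₂) ≤ √2·((1-1/D_min)/(2D_min) + 1/(D_min(D_min+1)) + 1/(D_min+1))·‖W‖_op. -/

import Mathlib

/-!
Deleting the edge `ab` lowers the degrees of `a` and `b` by one and changes no other degree, so
only coefficients involving `a` or `b` move. At the endpoint `a` (of degree `c`) the output loses
the term of `b`, its self-loop weight goes from `1/(c+1)` to `1/c`, and each of the other `c - 1`
neighbour weights moves by at most `(1/√c - 1/√(c+1))/√(D+1) ≤ 1/(2c√(c+1)√(D+1))`; altogether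
`‖Δ_a‖ ≤ (3D+1)/(2D(D+1)) ‖W‖`. Every other vertex changes only through the coefficients of the
endpoints among its neighbours, by the same amount; as an endpoint of degree `c` has only `c`
neighbours, these changes contribute at most `‖W‖²/(D(D+1)²)` to the squared total. The constant of
the theorem equals `(3D-1)/(2D²)`, and `2((3D+1)/(2D(D+1)))² + 1/(D(D+1)²) ≤ 2((3D-1)/(2D²))²`.
-/

lemma inv_sqrt_sub_inv_sqrt_add_one_le {c : ℝ} (hc : 0 < c) :
    (√c)⁻¹ - (√(c + 1))⁻¹ ≤ (2 * c * √(c + 1))⁻¹ := by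
  have hs : 0 < √c := Real.sqrt_pos.mpr hc
  have hs1 : 0 < √(c + 1) := Real.sqrt_pos.mpr (by linarith)
  have hsq : √c * √c = c := Real.mul_self_sqrt hc.le
  have hsq1 : √(c + 1) * √(c + 1) = c + 1 := Real.mul_self_sqrt (by linarith)
  -- `√(c+1) - √c = 1 / (√(c+1) + √c) ≤ 1 / (2 √c)`
  have hgap : √(c + 1) - √c ≤ (2 * √c)⁻¹ := by
    rw [← one_div, le_div_iff₀ (by positivity)]
    nlinarith [sq_nonneg (√(c + 1) - √c)]
  calc (√c)⁻¹ - (√(c + 1))⁻¹ = (√(c + 1) - √c) * (√c * √(c + 1))⁻¹ := by field_simp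
    _ ≤ (2 * √c)⁻¹ * (√c * √(c + 1))⁻¹ := by gcongr
    _ = (2 * c * √(c + 1))⁻¹ := by
      rw [← mul_inv]
      congr 1
      linear_combination (2 * √(c + 1)) * hsq

/-- The bound for the change of a coefficient `(√(d_v+1) √(c+1))⁻¹` when the degree `c` drops by
one and `D ≤ d_v`. -/
noncomputable def coeffShift (D c : ℝ) : ℝ := (2 * c * √(c + 1) * √(D + 1))⁻¹

lemma abs_inv_sqrt_mul_sub_le {c e D : ℝ} (hc : 0 < c) (hD : 0 ≤ D) (he : D ≤ e) :
    |(√(e + 1) * √(c + 1))⁻¹ - (√(e + 1) * √c)⁻¹| ≤ coeffShift D c := by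
  have hanti : (√(c + 1))⁻¹ ≤ (√c)⁻¹ :=
    inv_anti₀ (Real.sqrt_pos.mpr hc) (Real.sqrt_le_sqrt (by linarith))
  have he1 : 0 < √(e + 1) := Real.sqrt_pos.mpr (by linarith)
  rw [mul_inv, mul_inv, ← mul_sub, abs_mul, abs_of_pos (inv_pos.mpr he1), abs_sub_comm,
    abs_of_nonneg (sub_nonneg.mpr hanti), coeffShift, mul_inv (2 * c * √(c + 1)), mul_comm]
  exact mul_le_mul (inv_sqrt_sub_inv_sqrt_add_one_le hc)
    (inv_anti₀ (Real.sqrt_pos.mpr (by linarith)) (Real.sqrt_le_sqrt (by linarith)))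
    (by positivity) (by positivity)

lemma three_mul_sub_one_div_le {D c : ℝ} (hD : 2 ≤ D) (hc : D ≤ c) :
    (3 * c - 1) / (c * √(c + 1)) ≤ (3 * D - 1) / (D * √(D + 1)) := by
  have hsq : ((3 * c - 1) * (D * √(D + 1))) ^ 2 ≤ ((3 * D - 1) * (c * √(c + 1))) ^ 2 := by
    simp only [mul_pow, Real.sq_sqrt (by linarith : (0 : ℝ) ≤ D + 1),
      Real.sq_sqrt (by linarith : (0 : ℝ) ≤ c + 1)]
    -- the difference of the two sides, expanded in powers of `c - D`, has nonnegative coefficients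
    have he : 0 ≤ c - D := by linarith
    have h1 : 0 ≤ (c - D) * (D * (9 * D ^ 3 - 12 * D ^ 2 - 3 * D + 2)) :=
      mul_nonneg he (mul_nonneg (by linarith) (by nlinarith))
    have h2 : 0 ≤ (c - D) ^ 2 * (18 * D ^ 3 - 18 * D ^ 2 - 3 * D + 1) :=
      mul_nonneg (sq_nonneg _) (by nlinarith)
    have h3 : 0 ≤ (c - D) ^ 3 * (3 * D - 1) ^ 2 := mul_nonneg (pow_nonneg he 3) (sq_nonneg _)
    linear_combination h1 + h2 + h3
  have hDs : 0 < D * √(D + 1) := mul_pos (by linarith) (Real.sqrt_pos.mpr (by linarith))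
  have hcs : 0 < c * √(c + 1) := mul_pos (by linarith) (Real.sqrt_pos.mpr (by linarith))
  rw [div_le_div_iff₀ hcs hDs]
  exact (pow_le_pow_iff_left₀ (mul_nonneg (by linarith) hDs.le) (mul_nonneg (by linarith) hcs.le)
    two_ne_zero).mp hsq

lemma endpoint_coeff_le {D c : ℝ} (hD : 2 ≤ D) (hc : D ≤ c) :
    (c * (c + 1))⁻¹ + (c - 1) * coeffShift D c + (√(c + 1) * √(D + 1))⁻¹ ≤
      (3 * D + 1) / (2 * D * (D + 1)) := by
  have hD0 : 0 < D := by linarith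
  have hc0 : 0 < c := by linarith
  have hs : 0 < √(c + 1) := Real.sqrt_pos.mpr (by linarith)
  have ht : 0 < √(D + 1) := Real.sqrt_pos.mpr (by linarith)
  have hself : (c * (c + 1))⁻¹ ≤ (D * (D + 1))⁻¹ :=
    inv_anti₀ (by positivity) (by nlinarith)
  have hnbr : (c - 1) * coeffShift D c + (√(c + 1) * √(D + 1))⁻¹ =
      (3 * c - 1) / (c * √(c + 1)) / (2 * √(D + 1)) := by
    rw [coeffShift]
    field_simp
    ring
  have hmono : (3 * c - 1) / (c * √(c + 1)) / (2 * √(D + 1)) ≤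
      (3 * D - 1) / (D * √(D + 1)) / (2 * √(D + 1)) :=
    div_le_div_of_nonneg_right (three_mul_sub_one_div_le hD hc) (by positivity)
  have hsum : (D * (D + 1))⁻¹ + (3 * D - 1) / (D * √(D + 1)) / (2 * √(D + 1)) =
      (3 * D + 1) / (2 * D * (D + 1)) := by
    rw [div_div, show D * √(D + 1) * (2 * √(D + 1)) = 2 * D * (D + 1) by
      linear_combination (2 * D) * Real.mul_self_sqrt (by linarith : (0 : ℝ) ≤ D + 1)]
    field_simp
    ring
  linarith

lemma two_mul_mul_coeffShift_sq_le {D c : ℝ} (hD : 0 < D) (hc : D ≤ c) :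
    2 * c * coeffShift D c ^ 2 ≤ (2 * D * (D + 1) ^ 2)⁻¹ := by
  have hc0 : 0 < c := by linarith
  rw [coeffShift, inv_pow, mul_pow, mul_pow, Real.sq_sqrt (by linarith), Real.sq_sqrt (by linarith),
    show 2 * c * ((2 * c) ^ 2 * (c + 1) * (D + 1))⁻¹ = (2 * c * (c + 1) * (D + 1))⁻¹ by
      field_simp]
  refine inv_anti₀ (by positivity) ?_
  calc 2 * D * (D + 1) ^ 2 = 2 * D * (D + 1) * (D + 1) := by ring
    _ ≤ 2 * c * (c + 1) * (D + 1) := by gcongr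

lemma two_mul_sq_add_le {D : ℝ} (hD : 2 ≤ D) :
    2 * ((3 * D + 1) / (2 * D * (D + 1))) ^ 2 + (D * (D + 1) ^ 2)⁻¹ ≤
      2 * ((3 * D - 1) / (2 * D ^ 2)) ^ 2 := by
  have hD0 : 0 < D := by linarith
  have hgap : 2 * ((3 * D - 1) / (2 * D ^ 2)) ^ 2 -
      (2 * ((3 * D + 1) / (2 * D * (D + 1))) ^ 2 + (D * (D + 1) ^ 2)⁻¹) =
        (4 * D ^ 3 - 3 * D ^ 2 - 4 * D + 1) / (2 * D ^ 4 * (D + 1) ^ 2) := by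
    field_simp
    ring
  have hnum : 0 ≤ 4 * D ^ 3 - 3 * D ^ 2 - 4 * D + 1 := by nlinarith
  rw [← sub_nonneg, hgap]
  positivity

section Aggregation

variable {V E : Type*} [NormedAddCommGroup E] [NormedSpace ℝ E]

/-- The aggregation `h̃_v` of the paper, applied to `x u = W (h u)`. -/
noncomputable def gcnAgg (N : V → Finset V) (x : V → E) (v : V) : E :=
  (((N v).card : ℝ) + 1)⁻¹ • x v +
    ∑ u ∈ N v, (√(((N v).card : ℝ) + 1) * √(((N u).card : ℝ) + 1))⁻¹ • x u

lemma norm_sum_smul_le {x : V → E} {M : ℝ} (hx : ∀ u, ‖x u‖ ≤ M) (s : Finset V) (f : V → ℝ) :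
    ‖∑ u ∈ s, f u • x u‖ ≤ (∑ u ∈ s, |f u|) * M := by
  rw [Finset.sum_mul]
  refine (norm_sum_le _ _).trans (Finset.sum_le_sum fun u _ => ?_)
  rw [norm_smul, Real.norm_eq_abs]
  exact mul_le_mul_of_nonneg_left (hx u) (abs_nonneg _)

variable [DecidableEq V] {N N' : V → Finset V} {x : V → E} {M D : ℝ}

lemma norm_gcnAgg_sub_le_of_erase (hx : ∀ u, ‖x u‖ ≤ M) (hD : 2 ≤ D)
    (hdeg : ∀ v, D ≤ ((N v).card : ℝ)) {a b : V} (hab : b ∈ N a) (ha : N' a = (N a).erase b)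
    (hnbr : ∀ u ∈ (N a).erase b, N' u = N u) :
    ‖gcnAgg N x a - gcnAgg N' x a‖ ≤ (3 * D + 1) / (2 * D * (D + 1)) * M := by
  have hM : 0 ≤ M := (norm_nonneg _).trans (hx a)
  have hc' : ((N' a).card : ℝ) + 1 = (N a).card := by
    rw [ha]; exact_mod_cast Finset.card_erase_add_one hab
  set c : ℝ := ((N a).card : ℝ) with hc
  have hc0 : 0 < c := by linarith [hdeg a]
  have hdecomp : gcnAgg N x a - gcnAgg N' x a =
      ((c + 1)⁻¹ - c⁻¹) • x a +
      ∑ u ∈ (N a).erase b, ((√(c + 1) * √(((N u).card : ℝ) + 1))⁻¹ -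
        (√c * √(((N u).card : ℝ) + 1))⁻¹) • x u +
      (√(c + 1) * √(((N b).card : ℝ) + 1))⁻¹ • x b := by
    unfold gcnAgg
    rw [hc', Finset.sum_congr ha fun u hu => by rw [hnbr u hu], ← Finset.sum_erase_add _ _ hab]
    simp only [sub_smul, Finset.sum_sub_distrib]
    abel
  have hself : ‖((c + 1)⁻¹ - c⁻¹) • x a‖ ≤ (c * (c + 1))⁻¹ * M := by
    rw [norm_smul, Real.norm_eq_abs, abs_sub_comm,
      show c⁻¹ - (c + 1)⁻¹ = (c * (c + 1))⁻¹ by field_simp; ring, abs_of_pos (by positivity)]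
    exact mul_le_mul_of_nonneg_left (hx a) (by positivity)
  have hnbrs : ‖∑ u ∈ (N a).erase b, ((√(c + 1) * √(((N u).card : ℝ) + 1))⁻¹ -
      (√c * √(((N u).card : ℝ) + 1))⁻¹) • x u‖ ≤ (c - 1) * coeffShift D c * M := by
    refine (norm_sum_smul_le hx _ _).trans (mul_le_mul_of_nonneg_right ?_ hM)
    calc _ ≤ ∑ u ∈ (N a).erase b, coeffShift D c := Finset.sum_le_sum fun u _ => by
          rw [mul_comm (√(c + 1)), mul_comm √c]
          exact abs_inv_sqrt_mul_sub_le hc0 (by linarith) (hdeg u)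
      _ = (c - 1) * coeffShift D c := by
          rw [Finset.sum_const, nsmul_eq_mul, hc, ← Finset.card_erase_add_one hab]
          push_cast
          ring
  have hedge : ‖(√(c + 1) * √(((N b).card : ℝ) + 1))⁻¹ • x b‖ ≤ (√(c + 1) * √(D + 1))⁻¹ * M := by
    rw [norm_smul, Real.norm_eq_abs, abs_of_pos (by positivity)]
    refine mul_le_mul (inv_anti₀ (by positivity) ?_) (hx b) (norm_nonneg _) (by positivity)
    gcongr
    exact hdeg b
  calc ‖gcnAgg N x a - gcnAgg N' x a‖
      ≤ (c * (c + 1))⁻¹ * M + (c - 1) * coeffShift D c * M + (√(c + 1) * √(D + 1))⁻¹ * M := by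
        rw [hdecomp]
        exact norm_add₃_le.trans (add_le_add (add_le_add hself hnbrs) hedge)
    _ = ((c * (c + 1))⁻¹ + (c - 1) * coeffShift D c + (√(c + 1) * √(D + 1))⁻¹) * M := by ring
    _ ≤ (3 * D + 1) / (2 * D * (D + 1)) * M :=
        mul_le_mul_of_nonneg_right (endpoint_coeff_le hD (hdeg a)) hM

lemma norm_gcnAgg_sub_le_of_eq (hx : ∀ u, ‖x u‖ ≤ M) (hD : 0 ≤ D)
    (hdeg : ∀ v, D ≤ ((N v).card : ℝ)) {a b w : V} (hab : a ≠ b) (hw : N' w = N w)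
    (hda : ((N' a).card : ℝ) + 1 = (N a).card) (hdb : ((N' b).card : ℝ) + 1 = (N b).card)
    (hoth : ∀ u, u ≠ a → u ≠ b → N' u = N u) :
    ‖gcnAgg N x w - gcnAgg N' x w‖ ≤
      ((if a ∈ N w then coeffShift D (N a).card else 0) +
        (if b ∈ N w then coeffShift D (N b).card else 0)) * M := by
  have hM : 0 ≤ M := (norm_nonneg _).trans (hx w)
  have hdiff : gcnAgg N x w - gcnAgg N' x w = ∑ u ∈ N w,
      ((√(((N w).card : ℝ) + 1) * √(((N u).card : ℝ) + 1))⁻¹ -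
        (√(((N w).card : ℝ) + 1) * √(((N' u).card : ℝ) + 1))⁻¹) • x u := by
    unfold gcnAgg
    rw [hw]
    simp only [sub_smul, Finset.sum_sub_distrib]
    abel
  have hdrop : ∀ u, ((N' u).card : ℝ) + 1 = (N u).card →
      |(√(((N w).card : ℝ) + 1) * √(((N u).card : ℝ) + 1))⁻¹ -
        (√(((N w).card : ℝ) + 1) * √(((N' u).card : ℝ) + 1))⁻¹| ≤ coeffShift D (N u).card :=
    fun u hu => by
      rw [hu]
      exact abs_inv_sqrt_mul_sub_le (by rw [← hu]; positivity) hD (hdeg w)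
  rw [hdiff]
  refine (norm_sum_smul_le hx _ _).trans (mul_le_mul_of_nonneg_right ?_ hM)
  calc _ ≤ ∑ u ∈ N w, ((if u = a then coeffShift D (N a).card else 0) +
        (if u = b then coeffShift D (N b).card else 0)) := Finset.sum_le_sum fun u _ => by
        rcases eq_or_ne u a with rfl | hua
        · simpa [hab] using hdrop u hda
        rcases eq_or_ne u b with rfl | hub
        · simpa [hua] using hdrop u hdb
        simp [hua, hub, hoth u hua hub]
    _ = _ := by rw [Finset.sum_add_distrib, Finset.sum_ite_eq', Finset.sum_ite_eq']

lemma sum_ite_mem_sq_le (hsym : ∀ u v, u ∈ N v ↔ v ∈ N u) (s : Finset V) (a : V) (q : ℝ) :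
    ∑ w ∈ s, (if a ∈ N w then q else 0) ^ 2 ≤ (N a).card * q ^ 2 := by
  simp_rw [hsym a, ite_pow, zero_pow two_ne_zero]
  rw [Finset.sum_ite_mem, Finset.sum_const, nsmul_eq_mul]
  gcongr
  exact Finset.inter_subset_right

lemma sum_sq_norm_gcnAgg_sub_le_of_eq (hx : ∀ u, ‖x u‖ ≤ M) (hD : 0 < D)
    (hdeg : ∀ v, D ≤ ((N v).card : ℝ)) (hsym : ∀ u v, u ∈ N v ↔ v ∈ N u) {a b : V} (hab : a ≠ b)
    (hda : ((N' a).card : ℝ) + 1 = (N a).card) (hdb : ((N' b).card : ℝ) + 1 = (N b).card)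
    (hoth : ∀ u, u ≠ a → u ≠ b → N' u = N u) {s : Finset V} (hs : ∀ w ∈ s, N' w = N w) :
    ∑ w ∈ s, ‖gcnAgg N x w - gcnAgg N' x w‖ ^ 2 ≤ (D * (D + 1) ^ 2)⁻¹ * M ^ 2 := by
  set qa : V → ℝ := fun w => if a ∈ N w then coeffShift D (N a).card else 0
  set qb : V → ℝ := fun w => if b ∈ N w then coeffShift D (N b).card else 0
  have hqa := sum_ite_mem_sq_le hsym s a (coeffShift D (N a).card)
  have hqb := sum_ite_mem_sq_le hsym s b (coeffShift D (N b).card)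
  have hsa := two_mul_mul_coeffShift_sq_le hD (hdeg a)
  have hsb := two_mul_mul_coeffShift_sq_le hD (hdeg b)
  calc ∑ w ∈ s, ‖gcnAgg N x w - gcnAgg N' x w‖ ^ 2
      ≤ ∑ w ∈ s, 2 * (qa w ^ 2 + qb w ^ 2) * M ^ 2 := Finset.sum_le_sum fun w hw => by
        calc ‖gcnAgg N x w - gcnAgg N' x w‖ ^ 2 ≤ ((qa w + qb w) * M) ^ 2 :=
              pow_le_pow_left₀ (norm_nonneg _)
                (norm_gcnAgg_sub_le_of_eq hx hD.le hdeg hab (hs w hw) hda hdb hoth) 2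
          _ = (qa w + qb w) ^ 2 * M ^ 2 := mul_pow _ _ _
          _ ≤ 2 * (qa w ^ 2 + qb w ^ 2) * M ^ 2 := by gcongr; exact add_sq_le
    _ = 2 * (∑ w ∈ s, qa w ^ 2 + ∑ w ∈ s, qb w ^ 2) * M ^ 2 := by
        rw [← Finset.sum_mul, ← Finset.mul_sum, Finset.sum_add_distrib]
    _ ≤ ((2 * D * (D + 1) ^ 2)⁻¹ + (2 * D * (D + 1) ^ 2)⁻¹) * M ^ 2 := by
        gcongr
        linarith
    _ = (D * (D + 1) ^ 2)⁻¹ * M ^ 2 := by field_simp; ring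

theorem sum_sq_norm_gcnAgg_sub_le_of_edge_erase [Fintype V] (hx : ∀ u, ‖x u‖ ≤ M) (hD : 2 ≤ D)
    (hdeg : ∀ v, D ≤ ((N v).card : ℝ)) (hsym : ∀ u v, u ∈ N v ↔ v ∈ N u) (hloop : ∀ v, v ∉ N v)
    {a b : V} (hab : b ∈ N a) (hN'a : N' a = (N a).erase b) (hN'b : N' b = (N b).erase a)
    (hoth : ∀ w, w ≠ a → w ≠ b → N' w = N w) :
    ∑ v, ‖gcnAgg N x v - gcnAgg N' x v‖ ^ 2 ≤ 2 * ((3 * D - 1) / (2 * D ^ 2) * M) ^ 2 := by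
  have hba : a ∈ N b := (hsym a b).mpr hab
  have hne : a ≠ b := by rintro rfl; exact hloop a hab
  have hda : ((N' a).card : ℝ) + 1 = (N a).card := by
    rw [hN'a]; exact_mod_cast Finset.card_erase_add_one hab
  have hdb : ((N' b).card : ℝ) + 1 = (N b).card := by
    rw [hN'b]; exact_mod_cast Finset.card_erase_add_one hba
  have hKa := norm_gcnAgg_sub_le_of_erase hx hD hdeg hab hN'a fun u hu =>
    hoth u (ne_of_mem_of_not_mem (Finset.mem_of_mem_erase hu) (hloop a))
      (Finset.ne_of_mem_erase hu)
  have hKb := norm_gcnAgg_sub_le_of_erase hx hD hdeg hba hN'b fun u hu =>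
    hoth u (Finset.ne_of_mem_erase hu)
      (ne_of_mem_of_not_mem (Finset.mem_of_mem_erase hu) (hloop b))
  have hrest := sum_sq_norm_gcnAgg_sub_le_of_eq hx (by linarith) hdeg hsym hne hda hdb hoth
    (s := (Finset.univ.erase a).erase b) fun w hw =>
      hoth w (Finset.ne_of_mem_erase (Finset.mem_of_mem_erase hw)) (Finset.ne_of_mem_erase hw)
  rw [← Finset.add_sum_erase _ _ (Finset.mem_univ a),
    ← Finset.add_sum_erase _ _ (Finset.mem_erase.mpr ⟨hne.symm, Finset.mem_univ b⟩)]
  set K := (3 * D + 1) / (2 * D * (D + 1))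
  calc _ ≤ (K * M) ^ 2 + ((K * M) ^ 2 + (D * (D + 1) ^ 2)⁻¹ * M ^ 2) :=
        add_le_add (pow_le_pow_left₀ (norm_nonneg _) hKa 2)
          (add_le_add (pow_le_pow_left₀ (norm_nonneg _) hKb 2) hrest)
    _ = (2 * K ^ 2 + (D * (D + 1) ^ 2)⁻¹) * M ^ 2 := by ring
    _ ≤ 2 * ((3 * D - 1) / (2 * D ^ 2)) ^ 2 * M ^ 2 := by gcongr; exact two_mul_sq_add_le hD
    _ = 2 * ((3 * D - 1) / (2 * D ^ 2) * M) ^ 2 := by ring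

end Aggregation

theorem stmt_9_general {V : Type*} [Fintype V] [DecidableEq V] {d : ℕ}
    (Dmin : ℕ) (hDmin : 2 ≤ Dmin)
    (W : EuclideanSpace ℝ (Fin d) →L[ℝ] EuclideanSpace ℝ (Fin d))
    (h : V → EuclideanSpace ℝ (Fin d)) (hnorm : ∀ u : V, ‖h u‖ = 1)
    (N N' : V → Finset V)
    (hsym : ∀ u v : V, u ∈ N v ↔ v ∈ N u)
    (hloop : ∀ v : V, v ∉ N v)
    (hmindeg : ∀ v : V, Dmin ≤ (N v).card)
    (ustar vstar : V)
    (hu : vstar ∈ N ustar)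
    (hN'u : N' ustar = N ustar \ {vstar}) (hN'v : N' vstar = N vstar \ {ustar})
    (hother : ∀ w : V, w ≠ ustar → w ≠ vstar → N' w = N w)
    (t t' : V → EuclideanSpace ℝ (Fin d))
    (ht : ∀ v : V, t v = (((N v).card : ℝ) + 1)⁻¹ • W (h v) +
      ∑ u ∈ N v, (Real.sqrt (((N v).card : ℝ) + 1) * Real.sqrt (((N u).card : ℝ) + 1))⁻¹ • W (h u))
    (ht' : ∀ v : V, t' v = (((N' v).card : ℝ) + 1)⁻¹ • W (h v) +
      ∑ u ∈ N' v, (Real.sqrt (((N' v).card : ℝ) + 1) * Real.sqrt (((N' u).card : ℝ) + 1))⁻¹ • W (h u)) :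
    Real.sqrt (∑ v : V, ‖t v - t' v‖ ^ 2) ≤
      Real.sqrt 2 * ((1 - 1 / (Dmin : ℝ)) / (2 * (Dmin : ℝ)) +
        1 / ((Dmin : ℝ) * ((Dmin : ℝ) + 1)) + 1 / ((Dmin : ℝ) + 1)) * ‖W‖ := by
  have hD : (2 : ℝ) ≤ Dmin := by exact_mod_cast hDmin
  have hW : ∀ u, ‖W (h u)‖ ≤ ‖W‖ := fun u => by simpa [hnorm u] using W.le_opNorm (h u)
  obtain rfl : t = gcnAgg N (fun u => W (h u)) := funext ht
  obtain rfl : t' = gcnAgg N' (fun u => W (h u)) := funext ht'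
  have hsum := sum_sq_norm_gcnAgg_sub_le_of_edge_erase hW hD (fun v => by exact_mod_cast hmindeg v)
    hsym hloop hu (by rw [hN'u, Finset.sdiff_singleton_eq_erase])
    (by rw [hN'v, Finset.sdiff_singleton_eq_erase]) hother
  have hC : (1 - 1 / (Dmin : ℝ)) / (2 * Dmin) + 1 / (Dmin * (Dmin + 1)) + 1 / (Dmin + 1) =
      (3 * Dmin - 1) / (2 * Dmin ^ 2) := by
    field_simp
    ring
  have hCW : 0 ≤ (3 * (Dmin : ℝ) - 1) / (2 * Dmin ^ 2) * ‖W‖ :=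
    mul_nonneg (div_nonneg (by linarith) (by positivity)) (norm_nonneg _)
  rw [hC, mul_assoc, ← Real.sqrt_sq hCW, ← Real.sqrt_mul zero_le_two]
  exact Real.sqrt_le_sqrt hsum

theorem stmt_9 {V : Type*} [Fintype V] [DecidableEq V] {d : ℕ}
    (Dmin : ℕ) (hDmin : 2 ≤ Dmin)
    (W : EuclideanSpace ℝ (Fin d) →L[ℝ] EuclideanSpace ℝ (Fin d))
    (h : V → EuclideanSpace ℝ (Fin d)) (hnorm : ∀ u : V, ‖h u‖ = 1)
    (N N' : V → Finset V)
    (hsym : ∀ u v : V, u ∈ N v ↔ v ∈ N u)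
    (hloop : ∀ v : V, v ∉ N v)
    (hmindeg : ∀ v : V, Dmin ≤ (N v).card)
    (ustar vstar : V) (hne : ustar ≠ vstar)
    (hu : vstar ∈ N ustar) (hv : ustar ∈ N vstar)
    (hN'u : N' ustar = N ustar \ {vstar}) (hN'v : N' vstar = N vstar \ {ustar})
    (hother : ∀ w : V, w ≠ ustar → w ≠ vstar → N' w = N w)
    (t t' : V → EuclideanSpace ℝ (Fin d))
    (ht : ∀ v : V, t v = (((N v).card : ℝ) + 1)⁻¹ • W (h v) +
      ∑ u ∈ N v, (Real.sqrt (((N v).card : ℝ) + 1) * Real.sqrt (((N u).card : ℝ) + 1))⁻¹ • W (h u))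
    (ht' : ∀ v : V, t' v = (((N' v).card : ℝ) + 1)⁻¹ • W (h v) +
      ∑ u ∈ N' v, (Real.sqrt (((N' v).card : ℝ) + 1) * Real.sqrt (((N' u).card : ℝ) + 1))⁻¹ • W (h u)) :
    Real.sqrt (∑ v : V, ‖t v - t' v‖ ^ 2) ≤
      Real.sqrt 2 * ((1 - 1 / (Dmin : ℝ)) / (2 * (Dmin : ℝ)) +
        1 / ((Dmin : ℝ) * ((Dmin : ℝ) + 1)) + 1 / ((Dmin : ℝ) + 1)) * ‖W‖ :=
  stmt_9_general Dmin hDmin W h hnorm N N' hsym hloop hmindeg ustar vstar hu hN'u hN'v hother t t'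
    ht ht'
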